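/- Suppose (u,p,v,π) ∈ ℝ^{2(p+q)} satisfies H₁ = H₂ = D = 0 and both pairs (u,p) and (v,π) are linearly independent (in ℝ^p and ℝ^q respectively). Then the gradients dH₁, dH₂, dD are linearly independent at this point. -/

import Mathlib

/-! Only the `(u, p)`-block of the differential is needed. Tested on variations
`(a, b, 0, 0)`, the relation `α dH₁ + β dH₂ + γ dD = 0` reads
`(-β u + γ p) ⬝ᵥ a + (γ u + α p) ⬝ᵥ b = 0` for all `a, b`, so `-β u + γ p = 0 = γ u + α p`,
and the independence of `u` and `p` gives `α = β = γ = 0`. -/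

open scoped BigOperators

namespace Stmt5

abbrev Phase (np nq : ℕ) := (Fin np → ℝ) × (Fin np → ℝ) × (Fin nq → ℝ) × (Fin nq → ℝ)

variable {np nq : ℕ}

noncomputable def H1 (x : Phase np nq) : ℝ :=
  (1/2) * ((∑ i, (x.2.1 i)^2) - ∑ j, (x.2.2.1 j)^2)

noncomputable def H2 (x : Phase np nq) : ℝ :=
  (1/2) * ((∑ j, (x.2.2.2 j)^2) - ∑ i, (x.1 i)^2)

noncomputable def Dc (x : Phase np nq) : ℝ :=
  (∑ i, x.1 i * x.2.1 i) - ∑ j, x.2.2.1 j * x.2.2.2 j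

section DotProduct

variable {E ι : Type*} [NormedAddCommGroup E] [NormedSpace ℝ E] [Fintype ι]
  {f g : E → ι → ℝ} {x : E}

@[fun_prop]
theorem _root_.DifferentiableAt.dotProduct (hf : DifferentiableAt ℝ f x)
    (hg : DifferentiableAt ℝ g x) :
    DifferentiableAt ℝ (fun y => f y ⬝ᵥ g y) x :=
  DifferentiableAt.fun_sum fun i _ => (differentiableAt_pi.1 hf i).mul (differentiableAt_pi.1 hg i)

theorem _root_.fderiv_dotProduct_apply (hf : DifferentiableAt ℝ f x)
    (hg : DifferentiableAt ℝ g x) (h : E) :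
    fderiv ℝ (fun y => f y ⬝ᵥ g y) x h = f x ⬝ᵥ fderiv ℝ g x h + fderiv ℝ f x h ⬝ᵥ g x := by
  have hfg := HasFDerivAt.fun_sum (u := Finset.univ) fun i _ =>
    (hasFDerivAt_pi'.1 hf.hasFDerivAt i).fun_mul (hasFDerivAt_pi'.1 hg.hasFDerivAt i)
  rw [show (fun y => f y ⬝ᵥ g y) = fun y => ∑ i, f y i * g y i from rfl, hfg.fderiv]
  simp [dotProduct, Finset.sum_add_distrib, mul_comm]

end DotProduct

theorem H1_eq_dotProduct :
    (H1 : Phase np nq → ℝ) = fun y => (1/2) * (y.2.1 ⬝ᵥ y.2.1 - y.2.2.1 ⬝ᵥ y.2.2.1) := by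
  funext y; simp [H1, dotProduct, sq]

theorem H2_eq_dotProduct :
    (H2 : Phase np nq → ℝ) = fun y => (1/2) * (y.2.2.2 ⬝ᵥ y.2.2.2 - y.1 ⬝ᵥ y.1) := by
  funext y; simp [H2, dotProduct, sq]

theorem Dc_eq_dotProduct : (Dc : Phase np nq → ℝ) = fun y => y.1 ⬝ᵥ y.2.1 - y.2.2.1 ⬝ᵥ y.2.2.2 :=
  rfl

theorem fderiv_H1_apply (x h : Phase np nq) :
    fderiv ℝ H1 x h = x.2.1 ⬝ᵥ h.2.1 - x.2.2.1 ⬝ᵥ h.2.2.1 := by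
  rw [H1_eq_dotProduct, fderiv_const_mul (by fun_prop), fderiv_fun_sub (by fun_prop) (by fun_prop),
    smul_apply, sub_apply, fderiv_dotProduct_apply (by fun_prop) (by fun_prop),
    fderiv_dotProduct_apply (by fun_prop) (by fun_prop)]
  simp (disch := fun_prop) [fderiv.fst, fderiv.snd, dotProduct_comm h.2.1, dotProduct_comm h.2.2.1]
  ring

theorem fderiv_H2_apply (x h : Phase np nq) :
    fderiv ℝ H2 x h = x.2.2.2 ⬝ᵥ h.2.2.2 - x.1 ⬝ᵥ h.1 := by
  rw [H2_eq_dotProduct, fderiv_const_mul (by fun_prop), fderiv_fun_sub (by fun_prop) (by fun_prop),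
    smul_apply, sub_apply, fderiv_dotProduct_apply (by fun_prop) (by fun_prop),
    fderiv_dotProduct_apply (by fun_prop) (by fun_prop)]
  simp (disch := fun_prop) [fderiv.fst, fderiv.snd, dotProduct_comm h.2.2.2, dotProduct_comm h.1]
  ring

theorem fderiv_Dc_apply (x h : Phase np nq) :
    fderiv ℝ Dc x h = x.1 ⬝ᵥ h.2.1 + h.1 ⬝ᵥ x.2.1 - (x.2.2.1 ⬝ᵥ h.2.2.2 + h.2.2.1 ⬝ᵥ x.2.2.2) := by
  rw [Dc_eq_dotProduct, fderiv_fun_sub (by fun_prop) (by fun_prop), sub_apply,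
    fderiv_dotProduct_apply (by fun_prop) (by fun_prop),
    fderiv_dotProduct_apply (by fun_prop) (by fun_prop)]
  simp (disch := fun_prop) [fderiv.fst, fderiv.snd]

theorem gradients_independent (x : Phase np nq)
    (hup : ∀ a b : ℝ, a • x.1 + b • x.2.1 = 0 → a = 0 ∧ b = 0) :
    ∀ α β γ : ℝ,
      α • fderiv ℝ H1 x + β • fderiv ℝ H2 x + γ • fderiv ℝ Dc x = 0 →
      α = 0 ∧ β = 0 ∧ γ = 0 := by
  intro α β γ hc
  have hblock : ∀ a b : Fin np → ℝ,
      (-β • x.1 + γ • x.2.1) ⬝ᵥ a + (γ • x.1 + α • x.2.1) ⬝ᵥ b = 0 := by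
    intro a b
    have := DFunLike.congr_fun hc (a, b, 0, 0)
    simp only [add_apply, smul_apply, fderiv_H1_apply, fderiv_H2_apply, fderiv_Dc_apply] at this
    simp only [add_dotProduct, smul_dotProduct, dotProduct_comm a, dotProduct_zero, zero_dotProduct,
      zero_apply, smul_eq_mul] at this ⊢
    linear_combination this
  obtain ⟨hβ, hγ⟩ := hup (-β) γ (dotProduct_eq_zero _ fun a => by simpa using hblock a 0)
  obtain ⟨-, hα⟩ := hup γ α (dotProduct_eq_zero _ fun b => by simpa using hblock 0 b)
  exact ⟨hα, neg_eq_zero.1 hβ, hγ⟩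

end Stmt5
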